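/- The Jupp transformation J is injective: if two strictly increasing knot vectors τ, τ' ∈ (a,b)^p (with endpoints a, b appended) have J(τ) = J(τ'), then τ = τ'. -/

import Mathlib

/-!
Write `d i = τ (i+1) - τ i > 0` for the gaps of a knot vector. The components of `J(τ)` are the
logarithms of the consecutive gap ratios `d (i+1) / d i`, so `J(τ) = J(τ')` forces the gap vectors
of `τ` and `τ'` to be proportional. Both gap vectors sum to `b - a`, hence they coincide, and
since `τ 0 = τ' 0 = a` the knot vectors coincide as well.
-/

theorem Fin.sum_succ_sub_castSucc {M : Type*} [AddCommGroup M] :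
    ∀ {n : ℕ} (f : Fin (n + 1) → M),
      ∑ i : Fin n, (f i.succ - f i.castSucc) = f (Fin.last n) - f 0
  | 0, f => by simp
  | n + 1, f => by
    have ih := Fin.sum_succ_sub_castSucc (f ∘ Fin.castSucc)
    simp only [Function.comp_apply, Fin.castSucc_zero] at ih
    rw [Fin.sum_univ_castSucc]
    simp only [Fin.succ_castSucc]
    rw [ih, Fin.succ_last]
    abel

theorem Fin.eq_of_succ_sub_castSucc_eq {M : Type*} [AddCommGroup M] {n : ℕ}
    {f g : Fin (n + 1) → M} (h0 : f 0 = g 0)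
    (hsub : ∀ i : Fin n, f i.succ - f i.castSucc = g i.succ - g i.castSucc) : f = g := by
  funext i
  induction i using Fin.induction with
  | zero => exact h0
  | succ i ih => rw [← sub_add_cancel (f i.succ), hsub i, ih, sub_add_cancel]

theorem div_eq_div_zero_of_succ_div_castSucc_eq {K : Type*} [Field K] {n : ℕ}
    {d d' : Fin (n + 1) → K} (hd : ∀ i, d i ≠ 0) (hd' : ∀ i, d' i ≠ 0)
    (hratio : ∀ i : Fin n, d i.succ / d i.castSucc = d' i.succ / d' i.castSucc) (i : Fin (n + 1)) :
    d' i / d i = d' 0 / d 0 := by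
  induction i using Fin.induction with
  | zero => rfl
  | succ i ih =>
    rw [← ih, div_eq_div_iff (hd _) (hd _)]
    have := (div_eq_div_iff (hd i.castSucc) (hd' i.castSucc)).1 (hratio i)
    linear_combination -this

theorem eq_of_succ_div_castSucc_eq_of_sum_eq {K : Type*} [Field K] [LinearOrder K]
    [IsStrictOrderedRing K] {n : ℕ} {d d' : Fin (n + 1) → K}
    (hd : ∀ i, 0 < d i) (hd' : ∀ i, 0 < d' i)
    (hratio : ∀ i : Fin n, d i.succ / d i.castSucc = d' i.succ / d' i.castSucc)
    (hsum : ∑ i, d i = ∑ i, d' i) : d = d' := by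
  have hprop : ∀ i, d' i = d' 0 / d 0 * d i := fun i => by
    rw [← div_eq_div_zero_of_succ_div_castSucc_eq (fun j => (hd j).ne') (fun j => (hd' j).ne')
      hratio i, div_mul_cancel₀ _ (hd i).ne']
  have hsum_pos : 0 < ∑ i, d i := Finset.sum_pos (fun i _ => hd i) Finset.univ_nonempty
  have hc : d' 0 / d 0 = 1 := by
    have : d' 0 / d 0 * ∑ i, d i = 1 * ∑ i, d i := by
      rw [Finset.mul_sum, one_mul, hsum]
      exact Finset.sum_congr rfl fun i _ => (hprop i).symm
    exact mul_right_cancel₀ hsum_pos.ne' this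
  funext i
  rw [hprop, hc, one_mul]

theorem stmt_10_general (a b : ℝ) (p : ℕ) (τ τ' : Fin (p + 2) → ℝ)
    (hmono : StrictMono τ) (h0 : τ 0 = a) (hlast : τ (Fin.last (p + 1)) = b)
    (hmono' : StrictMono τ') (h0' : τ' 0 = a) (hlast' : τ' (Fin.last (p + 1)) = b)
    (hJ : ∀ i : Fin p,
      Real.log ((τ i.succ.succ - τ i.succ.castSucc) /
          (τ i.succ.castSucc - τ i.castSucc.castSucc)) =
        Real.log ((τ' i.succ.succ - τ' i.succ.castSucc) /
          (τ' i.succ.castSucc - τ' i.castSucc.castSucc))) :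
    τ = τ' := by
  have gap_pos : ∀ σ : Fin (p + 2) → ℝ, StrictMono σ →
      ∀ i : Fin (p + 1), 0 < σ i.succ - σ i.castSucc :=
    fun σ hσ i => sub_pos.2 (hσ i.castSucc_lt_succ)
  refine Fin.eq_of_succ_sub_castSucc_eq (h0.trans h0'.symm) (congrFun ?_)
  refine eq_of_succ_div_castSucc_eq_of_sum_eq (gap_pos τ hmono) (gap_pos τ' hmono')
    (fun i => ?_) ?_
  · -- `hJ i` matches up to the definitional equality `i.succ.castSucc = i.castSucc.succ`.
    exact Real.log_injOn_pos (div_pos (gap_pos τ hmono i.succ) (gap_pos τ hmono i.castSucc))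
      (div_pos (gap_pos τ' hmono' i.succ) (gap_pos τ' hmono' i.castSucc)) (hJ i)
  · rw [Fin.sum_succ_sub_castSucc, Fin.sum_succ_sub_castSucc, h0, hlast, h0', hlast']

/-- The Jupp transformation is injective: if two strictly increasing knot vectors with the
same endpoints `a`, `b` have the same image under `J`, they coincide. -/
theorem stmt_10 (a b : ℝ) (hab : a < b) (p : ℕ) (τ τ' : Fin (p + 2) → ℝ)
    (hmono : StrictMono τ) (h0 : τ 0 = a) (hlast : τ (Fin.last (p + 1)) = b)
    (hmono' : StrictMono τ') (h0' : τ' 0 = a) (hlast' : τ' (Fin.last (p + 1)) = b)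
    (hJ : ∀ i : Fin p,
      Real.log ((τ i.succ.succ - τ i.succ.castSucc) /
          (τ i.succ.castSucc - τ i.castSucc.castSucc)) =
        Real.log ((τ' i.succ.succ - τ' i.succ.castSucc) /
          (τ' i.succ.castSucc - τ' i.castSucc.castSucc))) :
    τ = τ' :=
  stmt_10_general a b p τ τ' hmono h0 hlast hmono' h0' hlast' hJ
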